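/- Let S be a finite set with |S| = n, let {S_L, S_R} be a bipartition of S into nonempty blocks, and let 𝒜 be a nondegenerate hierarchy over S. Then: (i) the number of clusters of 𝒜 that are incompatible with {S_L, S_R} is at most n − 2; (ii) the number of clusters of 𝒜 both of whose children are incompatible with {S_L, S_R} is at most min(|S_L|, |S_R|) − 1; and consequently (iii) Σ_{I∈𝒜} θ( #{A ∈ children(I,𝒜) : A is incompatible with {S_L, S_R}} ) ≤ n + min(|S_L|, |S_R|) − 3, where θ(x) = (x² + x)/2. -/

import Mathlib

open scoped Classical

namespace TreeDist

variable {α : Type*} [DecidableEq α]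

/-- Two finite sets are compatible if they are disjoint or nested. -/
def Compatible (A B : Finset α) : Prop :=
  A ∩ B = ∅ ∨ A ⊆ B ∨ B ⊆ A

/-- A hierarchy over `S`: a laminar family of nonempty subsets of `S`
containing `S` and all singletons. -/
def IsHierarchy (S : Finset α) (F : Finset (Finset α)) : Prop :=
  (∀ A ∈ F, A ⊆ S ∧ A.Nonempty) ∧
  (∀ A ∈ F, ∀ B ∈ F, Compatible A B) ∧
  S ∈ F ∧ ∀ i ∈ S, ({i} : Finset α) ∈ F

/-- A nondegenerate (binary) hierarchy: a hierarchy with `2|S| - 1` clusters,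
equivalently a maximal laminar family. -/
def Nondeg (S : Finset α) (F : Finset (Finset α)) : Prop :=
  IsHierarchy S F ∧ F.card = 2 * S.card - 1

/-- `P` is the parent of `I` in the family `F`: the smallest cluster of `F`
strictly containing `I`. -/
def IsParent (F : Finset (Finset α)) (I P : Finset α) : Prop :=
  P ∈ F ∧ I ⊂ P ∧ ∀ Q ∈ F, I ⊂ Q → P ⊆ Q

/-- `G` is the result of an NNI move on `F` at some grandchild `C`:
`G = (F \ {parent C}) ∪ {grandparent C \ C}`. -/
def IsNNIMove (F G : Finset (Finset α)) : Prop :=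
  ∃ C P GP, C ∈ F ∧ IsParent F C P ∧ IsParent F P GP ∧
    G = insert (GP \ C) (F.erase P)

/-- Restriction of a family of sets to `K`: `{A ∩ K : A ∈ F, A ∩ K ≠ ∅}`. -/
noncomputable def restrictFam (F : Finset (Finset α)) (K : Finset α) : Finset (Finset α) :=
  (F.image (· ∩ K)).filter fun A => A.Nonempty

/-- The cardinality of the smallest common ancestor of `i` and `j` in `F`, i.e. the
minimum cardinality of a cluster of `F` containing both `i` and `j`. -/
noncomputable def caCard (F : Finset (Finset α)) (i j : α) : ℕ :=
  sInf {n | ∃ A ∈ F, i ∈ A ∧ j ∈ A ∧ A.card = n}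

/-- Ultrametric representation `U(F)_{ij} = |ca(i,j)| - 1`. -/
noncomputable def Umat (F : Finset (Finset α)) (i j : α) : ℤ :=
  (caCard F i j : ℤ) - 1

/-- Cluster-cardinality distance `d_CC = (1/2) Σ_{i,j ∈ S} |U(F)_{ij} - U(G)_{ij}|`. -/
noncomputable def dCC (S : Finset α) (F G : Finset (Finset α)) : ℚ :=
  (1 / 2) * ∑ i ∈ S, ∑ j ∈ S, |((Umat F i j : ℚ)) - ((Umat G i j : ℚ))|

/-- Robinson–Foulds distance: half the size of the symmetric difference of cluster sets. -/
noncomputable def dRF (F G : Finset (Finset α)) : ℚ :=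
  (((F \ G) ∪ (G \ F)).card : ℚ) / 2

/-- Crossing dissimilarity: the number of incompatible pairs of clusters. -/
noncomputable def dCM (F G : Finset (Finset α)) : ℕ :=
  ((F ×ˢ G).filter fun p => ¬ Compatible p.1 p.2).card

/-- Depth of a cluster: the number of its strict ancestors in `F`. -/
noncomputable def depth (F : Finset (Finset α)) (I : Finset α) : ℕ :=
  (F.filter fun J => I ⊂ J).card

/-- The children of `I` in `F`: the clusters of `F` whose parent is `I`. -/
noncomputable def children (F : Finset (Finset α)) (I : Finset α) : Finset (Finset α) :=
  F.filter fun C => IsParent F C I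

/-- `η_{F,G}(I,J)`: the number of members of `(children I)|_J` incompatible with
the family `(children J)|_I`. -/
noncomputable def eta (F G : Finset (Finset α)) (I J : Finset α) : ℕ :=
  ((restrictFam (children F I) J).filter
    fun A => ∃ B ∈ restrictFam (children G J) I, ¬ Compatible A B).card

/-- `θ(x) = (x² + x)/2`. -/
def theta (x : ℕ) : ℚ := ((x : ℚ) ^ 2 + x) / 2

/-- Closed-form NNI navigation distance `d_Nav(F,G) = Σ_{I∈F, J∈G} θ(η_{F,G}(I,J))`. -/
noncomputable def dNav (F G : Finset (Finset α)) : ℚ :=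
  ∑ I ∈ F, ∑ J ∈ G, theta (eta F G I J)


end TreeDist

/-!
A crossing cluster meets both blocks, so it is neither a singleton nor `S`: it is one of the
`|S| - 2` non-root internal clusters. If all children of `I` cross, two of them meet `S_L`.
Fixing a well-order of `α`, such a cluster is charged to the least point of `S_L` in one of its
children that is not the least point of `S_L` in `I`; distinct clusters get distinct points and
the least point of `S_L` is never charged, whence `|S_L| - 1` (and likewise `|S_R| - 1`).
A nondegenerate hierarchy is binary, so every count `k` in (iii) is at most `2`, where
`θ(k) ≤ k + [k = 2]`. Summing, the first terms count crossing clusters other than `S`, bounded by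
(i), and the second the clusters of (ii).
-/

namespace TreeDist

open Finset

variable {α : Type*}

section Children

variable {F : Finset (Finset α)}

theorem IsParent.unique {I P P' : Finset α} (h : IsParent F I P) (h' : IsParent F I P') :
    P = P' :=
  subset_antisymm (h.2.2 P' h'.1 h'.2.1) (h'.2.2 P h.1 h.2.1)

theorem mem_children {C I : Finset α} : C ∈ children F I ↔ C ∈ F ∧ IsParent F C I :=
  mem_filter

theorem pairwiseDisjoint_children (F : Finset (Finset α)) :
    (F : Set (Finset α)).PairwiseDisjoint (children F) :=
  fun _ _ _ _ hIJ => disjoint_left.mpr fun _ hCI hCJ =>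
    hIJ ((mem_children.mp hCI).2.unique (mem_children.mp hCJ).2)

end Children

variable [DecidableEq α]

theorem card_filter_exists_rel_le {β : Type*} (r : β → β → Prop) [IsWellFounded β r]
    (X : Finset β) : #(X.filter fun y => ∃ z ∈ X, r z y) ≤ #X - 1 := by
  rcases X.eq_empty_or_nonempty with rfl | hX
  · simp
  · obtain ⟨m, hm, hmin⟩ := (IsWellFounded.wf : WellFounded r).has_min (X : Set β) hX
    rw [← card_erase_of_mem hm]
    refine card_le_card fun y hy => ?_
    obtain ⟨hyX, z, hzX, hzy⟩ := mem_filter.mp hy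
    exact mem_erase.mpr ⟨fun hym => hmin z hzX (hym ▸ hzy), hyX⟩

theorem sum_card_filter_children_le (F : Finset (Finset α)) (p : Finset α → Prop)
    [DecidablePred p] :
    ∑ I ∈ F, #((children F I).filter p) ≤ #(F.filter p) := by
  rw [← card_biUnion ((pairwiseDisjoint_children F).mono fun _ => filter_subset p _),
    ← filter_biUnion]
  exact card_le_card (filter_subset_filter p (biUnion_subset.mpr fun _ _ => filter_subset _ _))

def IsLaminar (F : Finset (Finset α)) : Prop :=
  ∀ A ∈ F, ∀ B ∈ F, Compatible A B

theorem not_compatible_iff {A B : Finset α} :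
    ¬ Compatible A B ↔ (A ∩ B).Nonempty ∧ ¬ A ⊆ B ∧ ¬ B ⊆ A := by
  simp only [Compatible, not_or, nonempty_iff_ne_empty]

theorem inter_nonempty_of_not_compatible {A B B' : Finset α} (hA : A ⊆ B ∪ B')
    (h : ¬ Compatible A B) : (A ∩ B).Nonempty ∧ (A ∩ B').Nonempty ∧ A ≠ B ∪ B' := by
  obtain ⟨hAB, hnAB, hnBA⟩ := not_compatible_iff.mp h
  obtain ⟨x, hxA, hxB⟩ := not_subset.mp hnAB
  refine ⟨hAB, ⟨x, mem_inter.mpr ⟨hxA, (mem_union.mp (hA hxA)).resolve_left hxB⟩⟩, ?_⟩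
  rintro rfl
  exact hnBA subset_union_left

theorem inter_nonempty_of_crosses {S SL SR A : Finset α} (hu : SL ∪ SR = S) (hA : A ⊆ S)
    (h : ¬ Compatible A SL ∨ ¬ Compatible A SR) :
    (A ∩ SL).Nonempty ∧ (A ∩ SR).Nonempty ∧ A ≠ S := by
  subst hu
  rcases h with h | h
  · exact inter_nonempty_of_not_compatible hA h
  · rw [union_comm] at hA ⊢
    obtain ⟨hR, hL, hne⟩ := inter_nonempty_of_not_compatible hA h
    exact ⟨hL, hR, hne⟩

section Laminar

variable {F : Finset (Finset α)}

theorem IsLaminar.subset_or_subset (hF : IsLaminar F) {A B : Finset α} (hA : A ∈ F)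
    (hB : B ∈ F) (hAB : (A ∩ B).Nonempty) : A ⊆ B ∨ B ⊆ A :=
  (hF A hA B hB).resolve_left hAB.ne_empty

theorem IsLaminar.disjoint_of_mem_children (hF : IsLaminar F) {I C C' : Finset α}
    (hC : C ∈ children F I) (hC' : C' ∈ children F I) (hne : C ≠ C') : Disjoint C C' := by
  rw [disjoint_iff_inter_eq_empty, ← not_nonempty_iff_eq_empty]
  intro hCC'
  obtain ⟨hCF, -, hCI, hCmin⟩ := mem_children.mp hC
  obtain ⟨hC'F, -, hC'I, hC'min⟩ := mem_children.mp hC'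
  rcases hF.subset_or_subset hCF hC'F hCC' with h | h
  · exact hC'I.not_subset (hCmin C' hC'F (h.ssubset_of_ne hne))
  · exact hCI.not_subset (hC'min C hCF (h.ssubset_of_ne hne.symm))

theorem IsLaminar.subset_of_mem_children (hF : IsLaminar F) {I J C : Finset α}
    (hC : C ∈ children F J) (hI : I ∈ F) (hIJ : I ⊂ J) (hIC : (I ∩ C).Nonempty) : I ⊆ C := by
  obtain ⟨hCF, -, -, hCmin⟩ := mem_children.mp hC
  rcases hF.subset_or_subset hI hCF hIC with h | hCI
  · exact h
  · rcases hCI.eq_or_ssubset with rfl | hCI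
    · exact subset_rfl
    · exact absurd (hCmin I hI hCI) hIJ.not_subset

def IsSplitPoint (r : α → α → Prop) (F : Finset (Finset α)) (X I : Finset α) (y : α) : Prop :=
  y ∈ X ∧ (∃ z ∈ I ∩ X, r z y) ∧ ∃ C ∈ children F I, y ∈ C ∧ ∀ w ∈ C ∩ X, ¬ r w y

theorem IsSplitPoint.mem {r : α → α → Prop} {X I : Finset α} {y : α}
    (hy : IsSplitPoint r F X I y) : y ∈ I := by
  obtain ⟨-, -, C, hC, hyC, -⟩ := hy
  exact (mem_children.mp hC).2.2.1.subset hyC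

theorem IsLaminar.not_ssubset_of_isSplitPoint (hF : IsLaminar F) {r : α → α → Prop}
    {X I J : Finset α} {y : α} (hI : I ∈ F) (hIy : IsSplitPoint r F X I y)
    (hJy : IsSplitPoint r F X J y) : ¬ I ⊂ J := by
  intro hIJ
  have hyI := hIy.mem
  obtain ⟨-, ⟨z, hz, hzy⟩, -⟩ := hIy
  obtain ⟨-, -, C, hC, hyC, hCmin⟩ := hJy
  have hIC := hF.subset_of_mem_children hC hI hIJ ⟨y, mem_inter.mpr ⟨hyI, hyC⟩⟩
  obtain ⟨hzI, hzX⟩ := mem_inter.mp hz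
  exact hCmin z (mem_inter.mpr ⟨hIC hzI, hzX⟩) hzy

theorem IsLaminar.eq_of_isSplitPoint (hF : IsLaminar F) {r : α → α → Prop}
    {X I J : Finset α} {y : α} (hI : I ∈ F) (hJ : J ∈ F) (hIy : IsSplitPoint r F X I y)
    (hJy : IsSplitPoint r F X J y) : I = J := by
  rcases hF.subset_or_subset hI hJ ⟨y, mem_inter.mpr ⟨hIy.mem, hJy.mem⟩⟩ with hIJ | hJI
  · exact hIJ.eq_or_ssubset.resolve_right (hF.not_ssubset_of_isSplitPoint hI hIy hJy)
  · exact (hJI.eq_or_ssubset.resolve_right (hF.not_ssubset_of_isSplitPoint hJ hJy hIy)).symm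

theorem IsLaminar.exists_isSplitPoint (hF : IsLaminar F) (r : α → α → Prop) [IsWellOrder α r]
    {X I C₁ C₂ : Finset α} (hC₁ : C₁ ∈ children F I) (hC₂ : C₂ ∈ children F I) (hne : C₁ ≠ C₂)
    (hX₁ : (C₁ ∩ X).Nonempty) (hX₂ : (C₂ ∩ X).Nonempty) : ∃ y, IsSplitPoint r F X I y := by
  obtain ⟨y₁, hy₁, hmin₁⟩ := IsWellFounded.wf.has_min (r := r) (↑(C₁ ∩ X)) hX₁
  obtain ⟨y₂, hy₂, hmin₂⟩ := IsWellFounded.wf.has_min (r := r) (↑(C₂ ∩ X)) hX₂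
  rw [mem_coe, mem_inter] at hy₁ hy₂
  wlog hlt : r y₁ y₂ generalizing C₁ C₂ y₁ y₂
  · rcases trichotomous_of r y₁ y₂ with h | rfl | h
    · exact absurd h hlt
    · exact absurd hy₂.1 (disjoint_left.mp (hF.disjoint_of_mem_children hC₁ hC₂ hne) hy₁.1)
    · exact this hC₂ hC₁ hne.symm hX₂ hX₁ y₂ hy₂ hmin₂ y₁ hy₁ hmin₁ h
  refine ⟨y₂, hy₂.2, ⟨y₁, ?_, hlt⟩, C₂, hC₂, hy₂.1, fun w hw => hmin₂ w hw⟩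
  exact mem_inter.mpr ⟨(mem_children.mp hC₁).2.2.1.subset hy₁.1, hy₁.2⟩

theorem IsLaminar.card_filter_two_children_meet_le (hF : IsLaminar F) (X : Finset α) :
    #(F.filter fun I => ∃ C₁ ∈ children F I, ∃ C₂ ∈ children F I,
        C₁ ≠ C₂ ∧ (C₁ ∩ X).Nonempty ∧ (C₂ ∩ X).Nonempty) ≤ #X - 1 := by
  refine (card_le_card_of_forall_subsingleton (IsSplitPoint WellOrderingRel F X)
    (fun I hI => ?_) fun y _ => ?_).trans (card_filter_exists_rel_le WellOrderingRel X)
  · obtain ⟨-, C₁, hC₁, C₂, hC₂, hne, hX₁, hX₂⟩ := mem_filter.mp hI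
    obtain ⟨y, hy⟩ := hF.exists_isSplitPoint WellOrderingRel hC₁ hC₂ hne hX₁ hX₂
    obtain ⟨z, hz, hzy⟩ := hy.2.1
    exact ⟨y, mem_filter.mpr ⟨hy.1, z, (mem_inter.mp hz).2, hzy⟩, hy⟩
  · rintro I ⟨hI, hIy⟩ J ⟨hJ, hJy⟩
    exact hF.eq_of_isSplitPoint (mem_filter.mp hI).1 (mem_filter.mp hJ).1 hIy hJy

end Laminar

section Hierarchy

variable {S : Finset α} {F : Finset (Finset α)}

theorem IsHierarchy.isLaminar (h : IsHierarchy S F) : IsLaminar F :=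
  h.2.1

theorem IsHierarchy.exists_isParent (h : IsHierarchy S F) {A : Finset α} (hA : A ∈ F)
    (hAS : A ≠ S) : ∃ P, IsParent F A P := by
  obtain ⟨hAsub, a, ha⟩ := h.1 A hA
  obtain ⟨P, hP, hPmin⟩ := exists_min_image (F.filter (A ⊂ ·)) card
    ⟨S, mem_filter.mpr ⟨h.2.2.1, hAsub.ssubset_of_ne hAS⟩⟩
  obtain ⟨hPF, hAP⟩ := mem_filter.mp hP
  refine ⟨P, hPF, hAP, fun Q hQ hAQ => ?_⟩
  rcases h.isLaminar.subset_or_subset hPF hQ ⟨a, mem_inter.mpr ⟨hAP.subset ha, hAQ.subset ha⟩⟩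
    with hPQ | hQP
  · exact hPQ
  · exact (eq_of_subset_of_card_le hQP (hPmin Q (mem_filter.mpr ⟨hQ, hAQ⟩))).ge

theorem IsHierarchy.exists_mem_children_mem (h : IsHierarchy S F) {I : Finset α} (hI : I ∈ F)
    (hI₁ : 1 < #I) {x : α} (hx : x ∈ I) : ∃ C ∈ children F I, x ∈ C := by
  have hxI : {x} ⊂ I :=
    (singleton_subset_iff.mpr hx).ssubset_of_ne fun hxI => by simp [← hxI] at hI₁
  obtain ⟨C, hC, hCmax⟩ := exists_max_image (F.filter fun A => x ∈ A ∧ A ⊂ I) card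
    ⟨{x}, mem_filter.mpr ⟨h.2.2.2 x ((h.1 I hI).1 hx), mem_singleton_self x, hxI⟩⟩
  obtain ⟨hCF, hxC, hCI⟩ := mem_filter.mp hC
  refine ⟨C, mem_children.mpr ⟨hCF, hI, hCI, fun Q hQ hCQ => ?_⟩, hxC⟩
  rcases h.isLaminar.subset_or_subset hQ hI ⟨x, mem_inter.mpr ⟨hCQ.subset hxC, hx⟩⟩
    with hQI | hIQ
  · rcases hQI.eq_or_ssubset with rfl | hQI
    · exact subset_rfl
    · exact absurd (hCmax Q (mem_filter.mpr ⟨hQ, hCQ.subset hxC, hQI⟩)) (card_lt_card hCQ).not_ge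
  · exact hIQ

theorem IsHierarchy.one_lt_card_of_mem_children (h : IsHierarchy S F) {C I : Finset α}
    (hC : C ∈ children F I) : 1 < #I := by
  obtain ⟨hCF, -, hCI, -⟩ := mem_children.mp hC
  exact (Nat.succ_le_of_lt (card_pos.mpr (h.1 C hCF).2)).trans_lt (card_lt_card hCI)

theorem IsHierarchy.one_lt_card_children (h : IsHierarchy S F) {I : Finset α} (hI : I ∈ F)
    (hI₁ : 1 < #I) : 1 < #(children F I) := by
  obtain ⟨x, hx⟩ := card_pos.mp (zero_lt_one.trans hI₁)
  obtain ⟨C, hC, hxC⟩ := h.exists_mem_children_mem hI hI₁ hx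
  obtain ⟨y, hyI, hyC⟩ := exists_of_ssubset (mem_children.mp hC).2.2.1
  obtain ⟨C', hC', hyC'⟩ := h.exists_mem_children_mem hI hI₁ hyI
  exact one_lt_card.mpr ⟨C, hC, C', hC', by rintro rfl; exact hyC hyC'⟩

theorem IsHierarchy.card_filter_children_forall_le (h : IsHierarchy S F) (X : Finset α)
    (p : Finset α → Prop) [DecidablePred p] (hp : ∀ A ∈ F, p A → (A ∩ X).Nonempty) :
    #(F.filter fun I => (children F I).Nonempty ∧ ∀ A ∈ children F I, p A) ≤ #X - 1 := by
  refine (card_le_card fun I hI => ?_).trans (h.isLaminar.card_filter_two_children_meet_le X)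
  obtain ⟨hIF, ⟨C, hC⟩, hall⟩ := mem_filter.mp hI
  obtain ⟨C₁, hC₁, C₂, hC₂, hne⟩ :=
    one_lt_card.mp (h.one_lt_card_children hIF (h.one_lt_card_of_mem_children hC))
  exact mem_filter.mpr ⟨hIF, C₁, hC₁, C₂, hC₂, hne,
    hp C₁ (mem_children.mp hC₁).1 (hall C₁ hC₁), hp C₂ (mem_children.mp hC₂).1 (hall C₂ hC₂)⟩

theorem IsHierarchy.sum_card_children (h : IsHierarchy S F) :
    ∑ I ∈ F, #(children F I) = #F - 1 := by
  have hunion : F.biUnion (children F) = F.erase S := by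
    ext A
    simp only [mem_biUnion, mem_erase, mem_children]
    constructor
    · rintro ⟨I, hI, hAF, -, hAI, -⟩
      exact ⟨fun hAS => hAI.not_subset (hAS ▸ (h.1 I hI).1), hAF⟩
    · rintro ⟨hAS, hAF⟩
      obtain ⟨P, hP⟩ := h.exists_isParent hAF hAS
      exact ⟨P, hP.1, hAF, hP⟩
  rw [← card_biUnion (pairwiseDisjoint_children F), hunion, card_erase_of_mem h.2.2.1]

theorem IsHierarchy.card_filter_card_eq_one (h : IsHierarchy S F) :
    #(F.filter fun A => #A = 1) = #S := by
  have hsingletons : F.filter (fun A => #A = 1) = S.image ({·}) := by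
    ext A
    simp only [mem_filter, mem_image, card_eq_one]
    constructor
    · rintro ⟨hA, a, rfl⟩
      exact ⟨a, (h.1 _ hA).1 (mem_singleton_self a), rfl⟩
    · rintro ⟨a, ha, rfl⟩
      exact ⟨h.2.2.2 a ha, a, rfl⟩
  rw [hsingletons, card_image_of_injective _ singleton_injective]

theorem Nondeg.card_filter_one_lt_card (hF : Nondeg S F) :
    #(F.filter fun A => 1 < #A) = #S - 1 := by
  have hsplit := card_filter_add_card_filter_not (s := F) fun A => #A = 1
  have hne : F.filter (fun A => ¬ #A = 1) = F.filter fun A => 1 < #A :=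
    filter_congr fun A hA => by have := card_pos.mpr (hF.1.1 A hA).2; omega
  rw [hF.1.card_filter_card_eq_one, hne, hF.2] at hsplit
  omega

/-- Each of the `#S - 1` non-singleton clusters has at least two children, while the children
of all clusters together are the `2 * #S - 2` clusters other than `S`. -/
theorem Nondeg.card_children_le_two (hF : Nondeg S F) (I : Finset α) :
    #(children F I) ≤ 2 := by
  by_contra! hI₂
  set N := F.filter fun A => 1 < #A
  obtain ⟨C, hC⟩ := card_pos.mp (zero_lt_two.trans hI₂)
  have hIN : I ∈ N :=
    mem_filter.mpr ⟨(mem_children.mp hC).2.1, hF.1.one_lt_card_of_mem_children hC⟩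
  have hlower : 2 * #N + 1 ≤ ∑ J ∈ N, #(children F J) := by
    calc 2 * #N + 1 = ∑ J ∈ N, (2 + if J = I then 1 else 0) := by
          rw [sum_add_distrib, sum_ite_eq' N I, if_pos hIN, sum_const, smul_eq_mul, mul_comm]
      _ ≤ ∑ J ∈ N, #(children F J) := sum_le_sum fun J hJ => by
          obtain ⟨hJF, hJ₁⟩ := mem_filter.mp hJ
          split_ifs with hJI
          · exact hJI ▸ hI₂
          · exact hF.1.one_lt_card_children hJF hJ₁
  have hupper : ∑ J ∈ N, #(children F J) = #F - 1 := by
    rw [← hF.1.sum_card_children, sum_filter_of_ne fun J _ hJ => ?_]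
    obtain ⟨C, hC⟩ := card_pos.mp (Nat.pos_of_ne_zero hJ)
    exact hF.1.one_lt_card_of_mem_children hC
  have hS := card_pos.mpr (hF.1.1 S hF.1.2.2.1).2
  have hN : #N = #S - 1 := hF.card_filter_one_lt_card
  have hcard := hF.2
  omega

end Hierarchy

section Bipartition

variable {S SL SR : Finset α} {F : Finset (Finset α)}

theorem Nondeg.card_filter_crosses_le (hF : Nondeg S F) (hd : Disjoint SL SR)
    (hu : SL ∪ SR = S) :
    #(F.filter fun I => ¬ Compatible I SL ∨ ¬ Compatible I SR) ≤ #S - 2 := by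
  have hsub : F.filter (fun I => ¬ Compatible I SL ∨ ¬ Compatible I SR) ⊆
      (F.filter fun A => 1 < #A).erase S := by
    intro A hA
    obtain ⟨hAF, hcross⟩ := mem_filter.mp hA
    obtain ⟨⟨a, ha⟩, ⟨b, hb⟩, hAS⟩ := inter_nonempty_of_crosses hu (hF.1.1 A hAF).1 hcross
    obtain ⟨haA, haL⟩ := mem_inter.mp ha
    obtain ⟨hbA, hbR⟩ := mem_inter.mp hb
    refine mem_erase.mpr ⟨hAS, mem_filter.mpr ⟨hAF, one_lt_card.mpr ⟨a, haA, b, hbA, ?_⟩⟩⟩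
    rintro rfl
    exact disjoint_left.mp hd haL hbR
  refine (card_le_card hsub).trans ?_
  rw [card_erase_eq_ite, hF.card_filter_one_lt_card]
  split_ifs with hS
  · omega
  · have : #S ≤ 1 := not_lt.mp fun hS₁ => hS (mem_filter.mpr ⟨hF.1.2.2.1, hS₁⟩)
    omega

theorem IsHierarchy.card_filter_children_crosses_le (h : IsHierarchy S F) (hu : SL ∪ SR = S) :
    #(F.filter fun I => (children F I).Nonempty ∧
        ∀ A ∈ children F I, ¬ Compatible A SL ∨ ¬ Compatible A SR) ≤ min #SL #SR - 1 := by
  have hL := h.card_filter_children_forall_le SL _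
    fun A hA hcross => (inter_nonempty_of_crosses hu (h.1 A hA).1 hcross).1
  have hR := h.card_filter_children_forall_le SR _
    fun A hA hcross => (inter_nonempty_of_crosses hu (h.1 A hA).1 hcross).2.1
  omega

theorem theta_le_of_le_two {k : ℕ} (hk : k ≤ 2) : theta k ≤ k + if k = 2 then 1 else 0 := by
  interval_cases k <;> norm_num [theta]

theorem Nondeg.sum_theta_card_filter_children_crosses_le (hF : Nondeg S F)
    (hL : SL.Nonempty) (hR : SR.Nonempty) (hd : Disjoint SL SR) (hu : SL ∪ SR = S) :
    ∑ I ∈ F, theta #((children F I).filter fun A => ¬ Compatible A SL ∨ ¬ Compatible A SR)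
      ≤ (#S : ℚ) + (min #SL #SR : ℚ) - 3 := by
  set k : Finset α → ℕ := fun I =>
    #((children F I).filter fun A => ¬ Compatible A SL ∨ ¬ Compatible A SR)
  have hk : ∀ I, k I ≤ #(children F I) := fun I => card_filter_le _ _
  have hsum : ∑ I ∈ F, k I ≤ #S - 2 :=
    (sum_card_filter_children_le F _).trans (hF.card_filter_crosses_le hd hu)
  -- with at most two children, `k I = 2` means that every child of `I` crosses
  have htwo : #(F.filter fun I => k I = 2) ≤ min #SL #SR - 1 := by
    refine (card_le_card fun I hI => ?_).trans (hF.1.card_filter_children_crosses_le hu)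
    obtain ⟨hIF, hkI⟩ := mem_filter.mp hI
    have heq : k I = #(children F I) := le_antisymm (hk I) (hkI ▸ hF.card_children_le_two I)
    refine mem_filter.mpr ⟨hIF, card_pos.mp ?_, filter_card_eq heq⟩
    rw [← heq, hkI]
    exact two_pos
  have hS : #S = #SL + #SR := hu ▸ card_union_of_disjoint hd
  have hL₁ := card_pos.mpr hL
  have hR₁ := card_pos.mpr hR
  have hnat : ∑ I ∈ F, k I + #(F.filter fun I => k I = 2) + 3 ≤ #S + min #SL #SR := by omega
  calc ∑ I ∈ F, theta (k I)
      ≤ ∑ I ∈ F, ((k I : ℚ) + if k I = 2 then 1 else 0) :=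
        sum_le_sum fun I _ => theta_le_of_le_two ((hk I).trans (hF.card_children_le_two I))
    _ = ((∑ I ∈ F, k I + #(F.filter fun I => k I = 2) : ℕ) : ℚ) := by
        rw [sum_add_distrib, sum_boole]; push_cast; rfl
    _ ≤ (#S : ℚ) + (min #SL #SR : ℚ) - 3 := by
        have := (Nat.cast_le (α := ℚ)).mpr hnat
        push_cast at this ⊢
        linarith

end Bipartition

theorem incompatibility_counts (S SL SR : Finset α)
    (hL : SL.Nonempty) (hR : SR.Nonempty) (hd : Disjoint SL SR) (hu : SL ∪ SR = S)
    (F : Finset (Finset α)) (hF : Nondeg S F) :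
    (F.filter fun I => ¬ Compatible I SL ∨ ¬ Compatible I SR).card ≤ S.card - 2 ∧
    (F.filter fun I => (children F I).Nonempty ∧
        ∀ A ∈ children F I, ¬ Compatible A SL ∨ ¬ Compatible A SR).card
      ≤ min SL.card SR.card - 1 ∧
    (∑ I ∈ F, theta (((children F I).filter
        fun A => ¬ Compatible A SL ∨ ¬ Compatible A SR).card))
      ≤ (S.card : ℚ) + (min SL.card SR.card : ℚ) - 3 :=
  ⟨hF.card_filter_crosses_le hd hu, hF.1.card_filter_children_crosses_le hu,
    hF.sum_theta_card_filter_children_crosses_le hL hR hd hu⟩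

end TreeDist
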